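/- arXiv:1509.03869 — 4 statements merged into one kernel-verified Lean document; each statement's English description precedes it below -/
import Mathlib

section
/- Let C be a filtered coalgebra over a field k, i.e. C = ⋃_{n≥0} C_n for an ascending chain of subspaces C_n with Δ(C_n) ⊆ ∑_{m≥0} C_m ⊗ C_{n-m}. Then every grouplike element g of C (that is, g ≠ 0 with Δ(g) = g ⊗ g) lies in C_0. -/
/-!
Let `g ∈ F n` with `n` minimal and suppose `n > 0`. A functional `f` vanishing on `F (n - 1)` with
`f g ≠ 0` kills every summand `F m ⊗ F (n - m)` of `Δ g` with `m < n`, so `(f ⊗ id) (Δ g) ∈ F 0`.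
For grouplike `g` this element is `f g • g`, hence `g ∈ F 0`.
-/

open TensorProduct

section Filtration

variable {R C : Type*} [CommSemiring R] [AddCommMonoid C] [Module R C] {F : ℕ → Submodule R C}

theorem smul_mem_filtration_zero_of_le_ker (hmono : Monotone F) {n : ℕ} {f : Module.Dual R C}
    (hf : F (n - 1) ≤ LinearMap.ker f) (m : Fin (n + 1)) {x y : C} (hx : x ∈ F m)
    (hy : y ∈ F (n - m)) : f x • y ∈ F 0 := by
  rcases Nat.lt_or_ge m n with hm | hm
  · rw [hf (hmono (Nat.le_sub_one_of_lt hm) hx), zero_smul]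
    exact (F 0).zero_mem
  · rw [Nat.sub_eq_zero_of_le hm] at hy
    exact (F 0).smul_mem _ hy

theorem lid_rTensor_mem_filtration_zero (hmono : Monotone F) {n : ℕ} {f : Module.Dual R C}
    (hf : F (n - 1) ≤ LinearMap.ker f) {t : C ⊗[R] C}
    (ht : t ∈ ⨆ m : Fin (n + 1), Submodule.map₂ (TensorProduct.mk R C C) (F m) (F (n - m))) :
    TensorProduct.lid R C (f.rTensor C t) ∈ F 0 := by
  refine (iSup_le fun m ↦ Submodule.map₂_le.mpr fun x hx y hy ↦ ?_ :
    _ ≤ (F 0).comap ((TensorProduct.lid R C).toLinearMap ∘ₗ f.rTensor C)) ht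
  simpa using smul_mem_filtration_zero_of_le_ker hmono hf m hx hy

end Filtration

section Grouplike

variable {k C : Type*} [Field k] [AddCommGroup C] [Module k C] [Coalgebra k C]
  {F : ℕ → Submodule k C}

theorem mem_filtration_zero_of_comul_eq_tmul_self (hmono : Monotone F) {n : ℕ}
    (hfilt : ∀ x ∈ F n, Coalgebra.comul (R := k) x ∈
      ⨆ m : Fin (n + 1), Submodule.map₂ (TensorProduct.mk k C C) (F m) (F (n - m)))
    {g : C} (hg : Coalgebra.comul (R := k) g = g ⊗ₜ[k] g) (hgn : g ∈ F n)
    (hgn' : g ∉ F (n - 1)) : g ∈ F 0 := by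
  obtain ⟨f, hfg, hf⟩ := (F (n - 1)).exists_dual_map_eq_bot_of_notMem hgn' inferInstance
  have hfg_smul : f g • g ∈ F 0 := by
    simpa [hg] using
      lid_rTensor_mem_filtration_zero hmono (LinearMap.le_ker_iff_map.mpr hf) (hfilt g hgn)
  exact (Submodule.smul_mem_iff _ hfg).mp hfg_smul

end Grouplike

theorem grouplike_mem_filtration_zero_general
    (k : Type) [Field k] (C : Type) [AddCommGroup C] [Module k C] [Coalgebra k C]
    (F : ℕ → Submodule k C) (hmono : Monotone F) (hexh : (⨆ n, F n) = ⊤)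
    (hfilt : ∀ n, ∀ x ∈ F n,
      Coalgebra.comul (R := k) x ∈
        ⨆ m : Fin (n + 1), Submodule.map₂ (TensorProduct.mk k C C) (F m) (F (n - m)))
    (g : C)
    (hg : Coalgebra.comul (R := k) g = g ⊗ₜ[k] g) :
    g ∈ F 0 := by
  obtain ⟨n, hgn⟩ := (Submodule.mem_iSup_of_directed F hmono.directed_le).mp
    (hexh ▸ Submodule.mem_top : g ∈ ⨆ n, F n)
  induction n with
  | zero => exact hgn
  | succ n ih =>
    by_cases hgn' : g ∈ F n
    · exact ih hgn'
    · exact mem_filtration_zero_of_comul_eq_tmul_self hmono (hfilt (n + 1)) hg hgn hgn'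

/-- In a filtered coalgebra `C = ⋃ₙ Cₙ` (with
`Δ(Cₙ) ⊆ ∑ₘ Cₘ ⊗ C_{n-m}`), every grouplike element lies in `C₀`. -/
theorem grouplike_mem_filtration_zero
    (k : Type) [Field k] (C : Type) [AddCommGroup C] [Module k C] [Coalgebra k C]
    (F : ℕ → Submodule k C) (hmono : Monotone F) (hexh : (⨆ n, F n) = ⊤)
    (hfilt : ∀ n, ∀ x ∈ F n,
      Coalgebra.comul (R := k) x ∈
        ⨆ m : Fin (n + 1), Submodule.map₂ (TensorProduct.mk k C C) (F m) (F (n - m)))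
    (g : C) (hg0 : g ≠ 0)
    (hg : Coalgebra.comul (R := k) g = g ⊗ₜ[k] g) :
    g ∈ F 0 :=
  grouplike_mem_filtration_zero_general k C F hmono hexh hfilt g hg
end

section
/- Let C be a filtered coalgebra C = ⋃_{n≥0} C_n over a field k, and let V be a nonzero finite-dimensional C-comodule. Then there exists a nonzero subspace V_0 of V such that the coaction restricts to a map V_0 → C_0 ⊗ V_0, i.e. V_0 is a C_0-comodule. -/
/-!
Put `Vₙ = δ⁻¹(Cₙ ⊗ V)`. Since `Δ(Cₙ₊₁) ⊆ C₀ ⊗ C + C ⊗ Cₙ`, coassociativity shows that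
`(C/C₀ ⊗ δₙ)(δ v) = 0` for `v ∈ Vₙ₊₁`, where `δₙ : V → C/Cₙ ⊗ V` has kernel `Vₙ`; over a field
tensoring preserves injectivity, so `Vₙ = 0` forces `Vₙ₊₁ ⊆ V₀`. Some `Vₙ` is nonzero by
exhaustiveness, hence `V₀ ≠ 0`. Likewise `Δ(C₀) ⊆ C ⊗ C₀` gives `δ(V₀) ⊆ ker (C ⊗ δ₀) = C ⊗ V₀`,
and `(C₀ ⊗ V) ∩ (C ⊗ V₀) = C₀ ⊗ V₀`.
-/

open TensorProduct LinearMap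

section TensorSubmodules

variable {R M N : Type*} [CommRing R] [AddCommGroup M] [Module R M] [AddCommGroup N] [Module R N]

theorem Submodule.map₂_mk_top_right_eq_range_rTensor (S : Submodule R M) :
    Submodule.map₂ (TensorProduct.mk R M N) S ⊤ = range (S.subtype.rTensor N) := by
  rw [rTensor, range_map, Submodule.range_subtype, range_id]

theorem Submodule.map₂_mk_top_left_eq_range_lTensor (W : Submodule R N) :
    Submodule.map₂ (TensorProduct.mk R M N) ⊤ W = range (W.subtype.lTensor M) := by
  rw [lTensor, range_map, Submodule.range_subtype, range_id]

theorem Submodule.mem_map₂_mk_top_right_iff {S : Submodule R M} {x : M ⊗[R] N} :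
    x ∈ Submodule.map₂ (TensorProduct.mk R M N) S ⊤ ↔ S.mkQ.rTensor N x = 0 := by
  rw [Submodule.map₂_mk_top_right_eq_range_rTensor, ← rTensor_mkQ, mem_ker]

theorem exists_mem_map₂_mk_top_of_iSup_eq_top {F : ℕ → Submodule R M} (hmono : Monotone F)
    (hexh : ⨆ n, F n = ⊤) (x : M ⊗[R] N) :
    ∃ n, x ∈ Submodule.map₂ (TensorProduct.mk R M N) (F n) ⊤ := by
  have hdir : Directed (· ≤ ·) fun n => Submodule.map₂ (TensorProduct.mk R M N) (F n) ⊤ :=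
    Monotone.directed_le fun _ _ h => Submodule.map₂_le_map₂ (hmono h) le_rfl
  rw [← Submodule.mem_iSup_of_directed _ hdir, ← Submodule.map₂_iSup_left, hexh,
    map₂_mk_top_top_eq_top]
  exact Submodule.mem_top

end TensorSubmodules

section VectorSpaces

variable {K M N : Type*} [Field K] [AddCommGroup M] [Module K M] [AddCommGroup N] [Module K N]

theorem Submodule.map₂_mk_top_inf_map₂_mk_top (S : Submodule K M) (W : Submodule K N) :
    Submodule.map₂ (TensorProduct.mk K M N) S ⊤ ⊓ Submodule.map₂ (TensorProduct.mk K M N) ⊤ W =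
      Submodule.map₂ (TensorProduct.mk K M N) S W := by
  refine le_antisymm (fun x ⟨hS, hW⟩ => ?_)
    (le_inf (Submodule.map₂_le_map₂ le_rfl le_top) (Submodule.map₂_le_map₂ le_top le_rfl))
  obtain ⟨q, hq⟩ := W.subtype.exists_leftInverse_of_injective W.ker_subtype
  set p := W.subtype ∘ₗ q
  have hfix : p.lTensor M x = x := by
    rw [Submodule.map₂_mk_top_left_eq_range_lTensor] at hW
    obtain ⟨y, rfl⟩ := hW
    rw [← LinearMap.comp_apply, ← lTensor_comp, comp_assoc, hq, comp_id]
  have hproj : Submodule.map₂ (TensorProduct.mk K M N) S ⊤ ≤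
      (Submodule.map₂ (TensorProduct.mk K M N) S W).comap (p.lTensor M) :=
    Submodule.map₂_le.mpr fun s hs n _ => Submodule.apply_mem_map₂ _ hs (q n).2
  exact hfix ▸ hproj hS

theorem ker_lTensor_eq_map₂_mk_top_ker {P : Type*} [AddCommGroup P] [Module K P]
    (g : N →ₗ[K] P) : ker (g.lTensor M) = Submodule.map₂ (TensorProduct.mk K M N) ⊤ (ker g) := by
  rw [Submodule.map₂_mk_top_left_eq_range_lTensor]
  exact (Module.Flat.lTensor_exact M (exact_subtype_ker_map g)).linearMap_ker_eq

end VectorSpaces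

section Comodule

variable {k C V : Type*} [Field k] [AddCommGroup C] [Module k C] [AddCommGroup V] [Module k V]

def coactionPreimage (δ : V →ₗ[k] C ⊗[k] V) (S : Submodule k C) : Submodule k V :=
  (Submodule.map₂ (TensorProduct.mk k C V) S ⊤).comap δ

theorem coactionPreimage_eq_ker (δ : V →ₗ[k] C ⊗[k] V) (S : Submodule k C) :
    coactionPreimage δ S = ker (S.mkQ.rTensor V ∘ₗ δ) := by
  ext v
  exact Submodule.mem_map₂_mk_top_right_iff

variable [Coalgebra k C]

def IsCoassociative (δ : V →ₗ[k] C ⊗[k] V) : Prop :=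
  ∀ v, TensorProduct.assoc k C C V (map Coalgebra.comul LinearMap.id (δ v)) =
    map LinearMap.id δ (δ v)

def IsCoalgebraFiltration (F : ℕ → Submodule k C) : Prop :=
  ∀ n, ∀ x ∈ F n, Coalgebra.comul (R := k) x ∈
    ⨆ m : Fin (n + 1), Submodule.map₂ (TensorProduct.mk k C C) (F m) (F (n - m))

theorem map_comp_coaction_coaction {δ : V →ₗ[k] C ⊗[k] V} (hcoassoc : IsCoassociative δ)
    {A B : Type*} [AddCommGroup A] [Module k A] [AddCommGroup B] [Module k B]
    (α : C →ₗ[k] A) (β : C →ₗ[k] B) (v : V) :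
    map α (β.rTensor V ∘ₗ δ) (δ v) =
      TensorProduct.assoc k A B V ((map α β ∘ₗ Coalgebra.comul).rTensor V (δ v)) := by
  rw [← comp_id α, map_comp, comp_apply, ← hcoassoc, comp_id, rTensor, rTensor, map_map_assoc,
    map_map, comp_id]

theorem map_comp_coaction_coaction_eq_zero {δ : V →ₗ[k] C ⊗[k] V} (hcoassoc : IsCoassociative δ)
    {A B : Type*} [AddCommGroup A] [Module k A] [AddCommGroup B] [Module k B]
    {α : C →ₗ[k] A} {β : C →ₗ[k] B} {S : Submodule k C}
    (hS : ∀ c ∈ S, map α β (Coalgebra.comul c) = 0) {v : V} (hv : v ∈ coactionPreimage δ S) :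
    map α (β.rTensor V ∘ₗ δ) (δ v) = 0 := by
  have hker : Submodule.map₂ (TensorProduct.mk k C V) S ⊤ ≤
      ker ((map α β ∘ₗ Coalgebra.comul).rTensor V) :=
    Submodule.map₂_le.mpr fun c hc w _ => by simp [hS c hc]
  rw [map_comp_coaction_coaction hcoassoc, hker hv, map_zero]

variable {F : ℕ → Submodule k C}

theorem map_comul_eq_zero_of_mem_filtration (hfilt : IsCoalgebraFiltration F)
    {A B : Type*} [AddCommGroup A] [Module k A] [AddCommGroup B] [Module k B]
    {α : C →ₗ[k] A} {β : C →ₗ[k] B} {n : ℕ}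
    (hαβ : ∀ m ≤ n, F m ≤ ker α ∨ F (n - m) ≤ ker β) {c : C} (hc : c ∈ F n) :
    map α β (Coalgebra.comul c) = 0 := by
  refine mem_ker.mp <|
    iSup_le (fun m => Submodule.map₂_le.mpr fun x hx y hy => ?_) (hfilt n c hc)
  rcases hαβ m (Nat.lt_succ_iff.mp m.2) with h | h
  · simp [mem_ker.mp (h hx)]
  · simp [mem_ker.mp (h hy)]

theorem coaction_mem_map₂_top_coactionPreimage {δ : V →ₗ[k] C ⊗[k] V}
    (hcoassoc : IsCoassociative δ) (hfilt : IsCoalgebraFiltration F)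
    {v : V} (hv : v ∈ coactionPreimage δ (F 0)) :
    δ v ∈ Submodule.map₂ (TensorProduct.mk k C V) ⊤ (coactionPreimage δ (F 0)) := by
  have hF0 : ∀ c ∈ F 0, map LinearMap.id (F 0).mkQ (Coalgebra.comul c) = 0 :=
    fun c => map_comul_eq_zero_of_mem_filtration hfilt fun _ _ => .inr (by simp)
  rw [coactionPreimage_eq_ker, ← ker_lTensor_eq_map₂_mk_top_ker]
  exact map_comp_coaction_coaction_eq_zero hcoassoc hF0 hv

theorem coactionPreimage_succ_le {δ : V →ₗ[k] C ⊗[k] V}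
    (hcoassoc : IsCoassociative δ) (hmono : Monotone F) (hfilt : IsCoalgebraFiltration F)
    {n : ℕ} (hn : coactionPreimage δ (F n) = ⊥) :
    coactionPreimage δ (F (n + 1)) ≤ coactionPreimage δ (F 0) := by
  intro v hv
  have hFn : ∀ c ∈ F (n + 1), map (F 0).mkQ (F n).mkQ (Coalgebra.comul c) = 0 := by
    refine fun c => map_comul_eq_zero_of_mem_filtration hfilt fun m hm => ?_
    rcases Nat.eq_zero_or_pos m with rfl | hm0
    · exact .inl (Submodule.ker_mkQ _).ge
    · exact .inr ((hmono (by omega)).trans (Submodule.ker_mkQ _).ge)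
  have hinj : Function.Injective (((F n).mkQ.rTensor V ∘ₗ δ).lTensor (C ⧸ F 0)) := by
    refine Module.Flat.lTensor_preserves_injective_linearMap _ ?_
    rw [← ker_eq_bot, ← coactionPreimage_eq_ker, hn]
  have h := map_comp_coaction_coaction_eq_zero hcoassoc hFn hv
  rw [← lTensor_comp_rTensor, comp_apply] at h
  rw [coactionPreimage_eq_ker, mem_ker, comp_apply]
  exact hinj (h.trans (map_zero _).symm)

theorem coactionPreimage_ne_bot [Nontrivial V] {δ : V →ₗ[k] C ⊗[k] V}
    (hcoassoc : IsCoassociative δ) (hmono : Monotone F) (hexh : ⨆ n, F n = ⊤)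
    (hfilt : IsCoalgebraFiltration F) :
    coactionPreimage δ (F 0) ≠ ⊥ := by
  have descend : ∀ n, coactionPreimage δ (F n) ≠ ⊥ → coactionPreimage δ (F 0) ≠ ⊥ := by
    intro n
    induction n with
    | zero => exact id
    | succ n ih =>
      by_cases hn : coactionPreimage δ (F n) = ⊥
      · exact fun h => ne_bot_of_le_ne_bot h (coactionPreimage_succ_le hcoassoc hmono hfilt hn)
      · exact fun _ => ih hn
  obtain ⟨v, hv⟩ := exists_ne (0 : V)
  obtain ⟨n, hn⟩ := exists_mem_map₂_mk_top_of_iSup_eq_top hmono hexh (δ v)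
  exact descend n ((Submodule.ne_bot_iff _).mpr ⟨v, hn, hv⟩)

end Comodule

theorem exists_C0_subcomodule_general
    (k : Type) [Field k] (C : Type) [AddCommGroup C] [Module k C] [Coalgebra k C]
    (F : ℕ → Submodule k C) (hmono : Monotone F) (hexh : (⨆ n, F n) = ⊤)
    (hfilt : ∀ n, ∀ x ∈ F n,
      Coalgebra.comul (R := k) x ∈
        ⨆ m : Fin (n + 1), Submodule.map₂ (TensorProduct.mk k C C) (F m) (F (n - m)))
    (V : Type) [AddCommGroup V] [Module k V] [Nontrivial V]
    (δ : V →ₗ[k] C ⊗[k] V)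
    (hcoassoc : ∀ v, (TensorProduct.assoc k C C V)
        (TensorProduct.map (Coalgebra.comul (R := k)) LinearMap.id (δ v))
      = TensorProduct.map LinearMap.id δ (δ v)) :
    ∃ V₀ : Submodule k V, V₀ ≠ ⊥ ∧
      ∀ v ∈ V₀, δ v ∈ Submodule.map₂ (TensorProduct.mk k C V) (F 0) V₀ :=
  ⟨coactionPreimage δ (F 0), coactionPreimage_ne_bot hcoassoc hmono hexh hfilt, fun _ hv =>
    (Submodule.map₂_mk_top_inf_map₂_mk_top _ _).le
      ⟨hv, coaction_mem_map₂_top_coactionPreimage hcoassoc hfilt hv⟩⟩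

/-- Let `C = ⋃ₙ Cₙ` be a filtered coalgebra over `k` and `V` a
nonzero finite-dimensional `C`-comodule with structure map `δ : V → C ⊗ V`.
Then there is a nonzero subspace `V₀ ⊆ V` with `δ(V₀) ⊆ C₀ ⊗ V₀`, i.e. `V₀` is a
`C₀`-comodule. -/
theorem exists_C0_subcomodule
    (k : Type) [Field k] (C : Type) [AddCommGroup C] [Module k C] [Coalgebra k C]
    (F : ℕ → Submodule k C) (hmono : Monotone F) (hexh : (⨆ n, F n) = ⊤)
    (hfilt : ∀ n, ∀ x ∈ F n,
      Coalgebra.comul (R := k) x ∈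
        ⨆ m : Fin (n + 1), Submodule.map₂ (TensorProduct.mk k C C) (F m) (F (n - m)))
    (V : Type) [AddCommGroup V] [Module k V] [FiniteDimensional k V] [Nontrivial V]
    (δ : V →ₗ[k] C ⊗[k] V)
    (hcoassoc : ∀ v, (TensorProduct.assoc k C C V)
        (TensorProduct.map (Coalgebra.comul (R := k)) LinearMap.id (δ v))
      = TensorProduct.map LinearMap.id δ (δ v))
    (hcounit : ∀ v, (TensorProduct.lid k V)
        (TensorProduct.map (Coalgebra.counit (R := k)) LinearMap.id (δ v)) = v) :
    ∃ V₀ : Submodule k V, V₀ ≠ ⊥ ∧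
      ∀ v ∈ V₀, δ v ∈ Submodule.map₂ (TensorProduct.mk k C V) (F 0) V₀ :=
  exists_C0_subcomodule_general k C F hmono hexh hfilt V δ hcoassoc
end

section
/- Let Λ be the monoid generated by d and δ^{±1} (with δδ^{-1} = δ^{-1}δ = 1) and let ≤₁ be the smallest left- and right-invariant partial order on Λ generated by 1 <₁ dδ^{-1}d and δ <₁ dd. Then for every λ ∈ Λ, the set π(λ) = { μ ∈ Λ : μ <₁ λ } is finite. -/
/-!
Send `Λ` to the free group `F(d, δ)` and measure `λ` by the reduced length `‖λ‖` of its image.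
Free reduction of a word in `d, δ, δ⁻¹` only ever cancels a pair `δδ⁻¹` or `δ⁻¹δ`, which is a
defining relation of `Λ`; so every `λ` is represented by a word of length `‖λ‖`, and only
finitely many `λ` have bounded `‖λ‖`. Moreover `d⁻¹` never occurs in the reduced image of an
element of `Λ`, so a letter `d` inserted between two such images never cancels. Hence
`‖a dδ⁻¹d b‖ = ‖a‖ + ‖b‖ + 3 > ‖ab‖` and `‖a dd b‖ = ‖a‖ + ‖b‖ + 2 > ‖aδb‖`: every step of `<₁`
strictly increases `‖·‖`, and `π(λ)` lies in the finite set `{μ | ‖μ‖ < ‖λ‖}`.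
-/

/-- Generators of the monoid `Λ`: `d`, `δ`, `δ⁻¹`. -/
inductive LamGen : Type
  | d : LamGen
  | del : LamGen
  | delInv : LamGen
  deriving DecidableEq

/-- The defining relations of `Λ`: `δ·δ⁻¹ = 1` and `δ⁻¹·δ = 1`. -/
def lamRel : FreeMonoid LamGen → FreeMonoid LamGen → Prop := fun x y =>
  (x = FreeMonoid.of LamGen.del * FreeMonoid.of LamGen.delInv ∧ y = 1) ∨
  (x = FreeMonoid.of LamGen.delInv * FreeMonoid.of LamGen.del ∧ y = 1)

def lamCon : Con (FreeMonoid LamGen) := conGen lamRel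

/-- The monoid `Λ`. -/
abbrev Lam : Type := lamCon.Quotient

def lamMk : FreeMonoid LamGen →* Lam := lamCon.mk'

def ld : Lam := lamMk (FreeMonoid.of LamGen.d)
def ldel : Lam := lamMk (FreeMonoid.of LamGen.del)
def ldelInv : Lam := lamMk (FreeMonoid.of LamGen.delInv)

/-- The generating relations of the order `<₁`: `1 <₁ dδ⁻¹d` and `δ <₁ dd`. -/
def ordBase : Lam → Lam → Prop := fun x y =>
  (x = 1 ∧ y = ld * ldelInv * ld) ∨ (x = ldel ∧ y = ld * ld)

/-- One step of the left- and right-invariant closure of the generating relations. -/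
def ordStep : Lam → Lam → Prop := fun x y =>
  ∃ a b u v : Lam, ordBase u v ∧ x = a * u * b ∧ y = a * v * b

namespace FreeGroup

variable {α : Type*}

theorem isReduced_append_singleton {L : List (α × Bool)} (hL : IsReduced L) {a : α × Bool}
    (ha : (a.1, !a.2) ∉ L) : IsReduced (L ++ [a]) := by
  refine List.isChain_append.2 ⟨hL, IsReduced.singleton, fun p hp q hq => ?_⟩
  obtain rfl : a = q := by simpa using hq
  have hpL : p ∈ L := List.mem_of_getLast? hp
  obtain ⟨p₁, p₂⟩ := p
  obtain ⟨a₁, a₂⟩ := a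
  rintro (rfl : p₁ = a₁)
  cases p₂ <;> cases a₂ <;> simp_all

theorem isReduced_singleton_append {L : List (α × Bool)} (hL : IsReduced L) {a : α × Bool}
    (ha : (a.1, !a.2) ∉ L) : IsReduced ([a] ++ L) := by
  refine List.isChain_append.2 ⟨IsReduced.singleton, hL, fun p hp q hq => ?_⟩
  obtain rfl : a = p := by simpa using hp
  have hqL : q ∈ L := List.mem_of_mem_head? hq
  obtain ⟨q₁, q₂⟩ := q
  obtain ⟨a₁, a₂⟩ := a
  rintro (rfl : a₁ = q₁)
  cases q₂ <;> cases a₂ <;> simp_all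

theorem norm_mul_of_mul [DecidableEq α] {x y : FreeGroup α} {a : α} (hx : (a, false) ∉ x.toWord)
    (hy : (a, false) ∉ y.toWord) : norm (x * of a * y) = norm x + 1 + norm y := by
  have hred : IsReduced (x.toWord ++ [(a, true)] ++ y.toWord) :=
    IsReduced.append_overlap (isReduced_append_singleton isReduced_toWord hx)
      (isReduced_singleton_append isReduced_toWord hy) (List.cons_ne_nil _ _)
  have hword : (x * of a * y).toWord = x.toWord ++ [(a, true)] ++ y.toWord := by
    rw [← hred.reduce_eq, ← toWord_mk, ← mul_mk, ← mul_mk, mk_toWord, mk_toWord]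
    rfl
  simp only [norm, hword, List.length_append, List.length_singleton]

end FreeGroup

namespace LamGen

instance : Fintype LamGen where
  elems := {d, del, delInv}
  complete g := by cases g <;> simp

/-- A generator of `Λ` as a letter over the alphabet `LamGen`, of which only `d` and `del` occur. -/
def letter : LamGen → LamGen × Bool
  | d => (d, true)
  | del => (del, true)
  | delInv => (del, false)

theorem letter_ne_d_false (g : LamGen) : g.letter ≠ (d, false) := by
  cases g <;> simp [letter]

theorem lamRel_of_letter_eq {p q : LamGen} {x : LamGen} {b : Bool} (hp : p.letter = (x, b))
    (hq : q.letter = (x, !b)) : lamRel (FreeMonoid.of p * FreeMonoid.of q) 1 := by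
  obtain ⟨rfl, rfl⟩ := Prod.ext_iff.1 hp.symm
  cases p <;> cases q <;> simp only [letter, Bool.not_true, Bool.not_false, Prod.mk.injEq, reduceCtorEq,
    Bool.true_eq_false, Bool.false_eq_true, and_false, and_true, and_self] at hq
  exacts [Or.inl ⟨rfl, rfl⟩, Or.inr ⟨rfl, rfl⟩]

end LamGen

open LamGen FreeGroup

namespace Lam

def toFreeGroup : Lam →* FreeGroup LamGen :=
  lamCon.lift (FreeMonoid.lift fun g => FreeGroup.mk [g.letter]) <| Con.conGen_le.2 <| by
    rintro x y (⟨rfl, rfl⟩ | ⟨rfl, rfl⟩)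
    · exact mul_inv_cancel (of del)
    · exact inv_mul_cancel (of del)

theorem toFreeGroup_lamMk (w : FreeMonoid LamGen) :
    toFreeGroup (lamMk w) = FreeGroup.mk (w.toList.map letter) := by
  change FreeMonoid.lift (fun g => FreeGroup.mk [g.letter]) w = _
  rw [FreeMonoid.lift_apply]
  induction w.toList with
  | nil => rfl
  | cons g l ih => rw [List.map_cons, List.map_cons, List.prod_cons, ih, mul_mk]; rfl

theorem exists_lamCon_of_step {w : FreeMonoid LamGen} {L : List (LamGen × Bool)}
    (h : Red.Step (w.toList.map letter) L) :
    ∃ w', lamCon w w' ∧ L = w'.toList.map letter := by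
  generalize hw : w.toList.map letter = L₀ at h
  obtain ⟨L₁, L₂, x, b⟩ := h
  obtain ⟨u₁, r, hwr, rfl, hr⟩ := List.map_eq_append_iff.1 hw
  obtain ⟨p, r, rfl, hp, hr⟩ := List.map_eq_cons_iff.1 hr
  obtain ⟨q, u₂, rfl, hq, rfl⟩ := List.map_eq_cons_iff.1 hr
  refine ⟨FreeMonoid.ofList (u₁ ++ u₂), ?_, by simp⟩
  rw [← FreeMonoid.ofList_toList w, hwr]
  have hcancel := lamCon.mul (lamCon.mul (lamCon.refl (FreeMonoid.ofList u₁))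
    (ConGen.Rel.of _ _ (lamRel_of_letter_eq hp hq))) (lamCon.refl (FreeMonoid.ofList u₂))
  simpa only [FreeMonoid.ofList_append, FreeMonoid.ofList_cons, mul_one, mul_assoc] using hcancel

theorem exists_lamCon_of_red {w : FreeMonoid LamGen} {L : List (LamGen × Bool)}
    (h : Red (w.toList.map letter) L) :
    ∃ w', lamCon w w' ∧ L = w'.toList.map letter := by
  induction h with
  | refl => exact ⟨w, lamCon.refl w, rfl⟩
  | tail _ hstep ih =>
    obtain ⟨w', hww', rfl⟩ := ih
    obtain ⟨w'', hw'w'', rfl⟩ := exists_lamCon_of_step hstep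
    exact ⟨w'', lamCon.trans hww' hw'w'', rfl⟩

theorem exists_toWord_toFreeGroup_eq (x : Lam) :
    ∃ w, lamMk w = x ∧ (toFreeGroup x).toWord = w.toList.map letter := by
  obtain ⟨w, rfl⟩ := Con.mk'_surjective (c := lamCon) x
  obtain ⟨w', hww', hw'⟩ := exists_lamCon_of_red (reduce.red (L := w.toList.map letter))
  refine ⟨w', ((Con.eq lamCon).2 hww').symm, ?_⟩
  rw [← hw', ← toWord_mk, ← toFreeGroup_lamMk]
  rfl

theorem d_false_not_mem_toWord (x : Lam) : (d, false) ∉ (toFreeGroup x).toWord := by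
  obtain ⟨w, -, hw⟩ := exists_toWord_toFreeGroup_eq x
  simpa [hw] using fun g _ => letter_ne_d_false g

theorem finite_norm_toFreeGroup_lt (n : ℕ) : {x : Lam | (toFreeGroup x).norm < n}.Finite := by
  refine ((List.finite_length_lt LamGen n).image (lamMk ∘ FreeMonoid.ofList)).subset ?_
  intro x hx
  obtain ⟨w, rfl, hw⟩ := exists_toWord_toFreeGroup_eq x
  refine ⟨w.toList, ?_, by simp⟩
  rwa [Set.mem_ofPred_eq, FreeGroup.norm, hw, List.length_map] at hx

theorem norm_toFreeGroup_mul_le (x y : Lam) :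
    (toFreeGroup (x * y)).norm ≤ (toFreeGroup x).norm + (toFreeGroup y).norm :=
  _root_.map_mul toFreeGroup x y ▸ norm_mul_le _ _

theorem toFreeGroup_ld : toFreeGroup ld = of d := rfl

theorem norm_toFreeGroup_ldel : (toFreeGroup ldel).norm = 1 := norm_of del

theorem norm_toFreeGroup_ldelInv : (toFreeGroup ldelInv).norm = 1 :=
  (norm_inv_eq (x := of del)).trans (norm_of del)

theorem norm_toFreeGroup_mul_ld_mul (x y : Lam) :
    (toFreeGroup (x * ld * y)).norm = (toFreeGroup x).norm + 1 + (toFreeGroup y).norm := by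
  rw [_root_.map_mul, _root_.map_mul, toFreeGroup_ld]
  exact norm_mul_of_mul (d_false_not_mem_toWord x) (d_false_not_mem_toWord y)

theorem norm_toFreeGroup_lt_of_ordStep {m l : Lam} (h : ordStep m l) :
    (toFreeGroup m).norm < (toFreeGroup l).norm := by
  obtain ⟨a, b, u, v, ⟨rfl, rfl⟩ | ⟨rfl, rfl⟩, rfl, rfl⟩ := h
  · have hl : a * (ld * ldelInv * ld) * b = a * ld * (ldelInv * ld * b) := by
      simp only [mul_assoc]
    have hm := norm_toFreeGroup_mul_le a b
    rw [hl, norm_toFreeGroup_mul_ld_mul, norm_toFreeGroup_mul_ld_mul, mul_one,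
      norm_toFreeGroup_ldelInv]
    omega
  · have hl : a * (ld * ld) * b = a * ld * (1 * ld * b) := by
      simp only [mul_assoc, one_mul]
    have hm := norm_toFreeGroup_mul_le (a * ldel) b
    have ha := norm_toFreeGroup_mul_le a ldel
    rw [hl, norm_toFreeGroup_mul_ld_mul, norm_toFreeGroup_mul_ld_mul, _root_.map_one,
      FreeGroup.norm_one]
    rw [norm_toFreeGroup_ldel] at ha
    omega

theorem norm_toFreeGroup_lt_of_transGen {m l : Lam} (h : Relation.TransGen ordStep m l) :
    (toFreeGroup m).norm < (toFreeGroup l).norm := by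
  have hlt := Relation.TransGen.lift (p := (· < ·)) (fun x => (toFreeGroup x).norm)
    (fun _ _ => norm_toFreeGroup_lt_of_ordStep) _ _ h
  rwa [Relation.transGen_eq_self] at hlt

end Lam

/-- For the smallest left- and right-invariant partial order `≤₁`
generated by `1 <₁ dδ⁻¹d`, `δ <₁ dd` (whose strict part is the transitive closure
of the translated generating relations), the set `π(λ) = {μ : μ <₁ λ}` is finite
for every `λ ∈ Λ`. -/
theorem pi_lambda_finite (l : Lam) :
    {m : Lam | Relation.TransGen ordStep m l}.Finite :=
  (Lam.finite_norm_toFreeGroup_lt (Lam.toFreeGroup l).norm).subset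
    fun _ => Lam.norm_toFreeGroup_lt_of_transGen
end

section
/- In the free algebra k⟨a,b,c,d,δ,δ^{-1}⟩ modulo the relations ac = ca, bd = db, ad − cb = δ = da − bc, δδ^{-1} = 1 = δ^{-1}δ, aδ^{-1}d − bδ^{-1}c = 1 = dδ^{-1}a − cδ^{-1}b, bδ^{-1}a − aδ^{-1}b = 0 = cδ^{-1}d − dδ^{-1}c, the set of monomials δ^{x₁}w₁δ^{x₂}w₂⋯wₙδ^{xₙ₊₁} — where xᵢ ∈ ℤ, xᵢ ≠ 0 for interior indices, each wᵢ is a nonempty word in a,b,c,d with non-decreasing row index, and whenever an interior xᵢ = −1 the column index of the letters adjacent to δ^{-1} is non-decreasing — forms a k-vector space basis of the quotient algebra O_nc(GL₂). -/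
/-- The six generators `a, b, c, d, δ, δ⁻¹` of `O_nc(GL₂)`. -/
inductive GL2Gen : Type
  | a : GL2Gen
  | b : GL2Gen
  | c : GL2Gen
  | d : GL2Gen
  | del : GL2Gen
  | delInv : GL2Gen
  deriving DecidableEq

open GL2Gen

/-- The free algebra on the six generators. -/
abbrev FGL2 (k : Type) [Field k] : Type := FreeAlgebra k GL2Gen

namespace GL2Rel

variable (k : Type) [Field k]

local notation "ι" => FreeAlgebra.ι k (X := GL2Gen)

/-- The defining relations of `O_nc(GL₂)`. -/
inductive rel : FGL2 k → FGL2 k → Prop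
  | ac_comm : rel (ι a * ι c) (ι c * ι a)
  | bd_comm : rel (ι b * ι d) (ι d * ι b)
  | det1 : rel (ι a * ι d - ι c * ι b) (ι del)
  | det2 : rel (ι d * ι a - ι b * ι c) (ι del)
  | delInv1 : rel (ι del * ι delInv) 1
  | delInv2 : rel (ι delInv * ι del) 1
  | anti1 : rel (ι a * ι delInv * ι d - ι b * ι delInv * ι c) 1
  | anti2 : rel (ι d * ι delInv * ι a - ι c * ι delInv * ι b) 1
  | anti3 : rel (ι b * ι delInv * ι a - ι a * ι delInv * ι b) 0
  | anti4 : rel (ι c * ι delInv * ι d - ι d * ι delInv * ι c) 0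

end GL2Rel

/-- The algebra `O_nc(GL₂) = k⟨a,b,c,d,δ,δ⁻¹⟩/I`. -/
abbrev OncGL2 (k : Type) [Field k] : Type := RingQuot (GL2Rel.rel k)

/-- The images of the generators in `O_nc(GL₂)`. -/
noncomputable def gl2gen (k : Type) [Field k] (g : GL2Gen) : OncGL2 k :=
  RingQuot.mkAlgHom k (GL2Rel.rel k) (FreeAlgebra.ι k g)

/-- The forbidden subwords characterizing the normal-form monomials from the
Bergman diamond lemma (order `δ⁻¹ < δ < a < b < c < d`):
decreasing row index inside a letter word (`ca, cb, da, db`), mixed `δ`-powers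
(`δδ⁻¹, δ⁻¹δ`), and for an interior block `δ⁻¹` a decreasing column index
around it (`bδ⁻¹a, bδ⁻¹c, dδ⁻¹a, dδ⁻¹c`). -/
def forbiddenWords : List (List GL2Gen) :=
  [[c, a], [c, b], [d, a], [d, b], [del, delInv], [delInv, del],
   [b, delInv, a], [b, delInv, c], [d, delInv, a], [d, delInv, c]]

/-- A word is in normal form iff it avoids all forbidden subwords; such words are
exactly the monomials `δ^{x₁}w₁δ^{x₂}w₂⋯wₙδ^{xₙ₊₁}` of the statement. -/
def normalWord (l : List GL2Gen) : Prop :=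
  ∀ p ∈ forbiddenWords, ¬ p <:+: l

/-!
Bergman's diamond lemma for this presentation. Oriented as rewriting rules, the defining relations
have exactly the forbidden words as left-hand sides, and every rule decreases words in a shortlex
order compatible with concatenation; so every word reduces to a combination of normal words, which
gives spanning. For independence, let `nf w` reduce an arbitrary redex of `w`. By well-founded
induction, all one-step reductions of `w` have the same `nf`: two redexes are disjoint, coincide,
or overlap in one of ten ambiguities, each of which resolves after three further reductions. Hence
left multiplication by the generators on the free module over the normal words satisfies the
defining relations, and the resulting representation maps the monomial of a normal word to the
corresponding basis vector.
-/

theorem List.Lex.append_right_of_length_eq {α : Type*} {r : α → α → Prop} {s₁ s₂ : List α}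
    (h : List.Lex r s₁ s₂) (hl : s₁.length = s₂.length) (t : List α) :
    List.Lex r (s₁ ++ t) (s₂ ++ t) := by
  induction h with
  | nil => simp at hl
  | cons _ ih => exact .cons (ih (by simpa using hl))
  | rel hab => exact .rel hab

theorem List.Shortlex.append_right_mono {α : Type*} {r : α → α → Prop} {s₁ s₂ : List α}
    (h : List.Shortlex r s₁ s₂) (t : List α) : List.Shortlex r (s₁ ++ t) (s₂ ++ t) := by
  rcases List.shortlex_def.mp h with hlt | ⟨hl, hlex⟩
  · exact .of_length_lt (by simpa using hlt)
  · exact .of_lex (by simp [hl]) (hlex.append_right_of_length_eq hl t)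

theorem List.sum_map_sum_map {α β M : Type*} [AddCommMonoid M] (l₁ : List α) (l₂ : List β)
    (f : α → β → M) :
    (l₁.map fun i => (l₂.map (f i)).sum).sum = (l₂.map fun j => (l₁.map (f · j)).sum).sum := by
  simpa using Multiset.sum_map_sum_map (l₁ : Multiset α) (l₂ : Multiset β) (f := f)

namespace GL2NF

open GL2Gen List

abbrev Word : Type := List GL2Gen

/-- The rules never compare `δ^{±1}` with another letter, so these may share the rank of `a`. -/
def rank : GL2Gen → ℕ
  | a => 0 | b => 1 | c => 2 | d => 3 | del => 0 | delInv => 0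

def WordLt : Word → Word → Prop := Shortlex fun x y => rank x < rank y

instance : DecidableRel WordLt := fun _ _ =>
  decidable_of_iff _ shortlex_def.symm

theorem wellFounded_wordLt : WellFounded WordLt :=
  Shortlex.wf (InvImage.wf rank wellFounded_lt)

theorem WordLt.context {u v : Word} (h : WordLt u v) (x t : Word) :
    WordLt (x ++ u ++ t) (x ++ v ++ t) :=
  (Shortlex.append_left h x).append_right_mono t

/-- `Rule p r` rewrites `p` into the `ℤ`-combination `∑ (c, q) ∈ r, c • q`. -/
inductive Rule : Word → List (ℤ × Word) → Prop
  | ca : Rule [c, a] [(1, [a, c])]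
  | cb : Rule [c, b] [(1, [a, d]), (-1, [del])]
  | da : Rule [d, a] [(1, [del]), (1, [b, c])]
  | db : Rule [d, b] [(1, [b, d])]
  | del_delInv : Rule [del, delInv] [(1, [])]
  | delInv_del : Rule [delInv, del] [(1, [])]
  | b_delInv_a : Rule [b, delInv, a] [(1, [a, delInv, b])]
  | b_delInv_c : Rule [b, delInv, c] [(1, [a, delInv, d]), (-1, [])]
  | d_delInv_a : Rule [d, delInv, a] [(1, [c, delInv, b]), (1, [])]
  | d_delInv_c : Rule [d, delInv, c] [(1, [c, delInv, d])]

def overlaps : List (Word × Word × Word) :=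
  [([c], [b], [delInv, a]), ([c], [b], [delInv, c]), ([d], [b], [delInv, a]),
    ([d], [b], [delInv, c]), ([del], [delInv], [del]), ([delInv], [del], [delInv]),
    ([b, delInv], [c], [a]), ([b, delInv], [c], [b]), ([d, delInv], [c], [a]),
    ([d, delInv], [c], [b])]

namespace Rule

variable {p p' : Word} {r r' : List (ℤ × Word)}

theorem wordLt (h : Rule p r) : ∀ q ∈ r, WordLt q.2 p := by
  cases h <;> decide

theorem eq_of_isInfix (h : Rule p r) (h' : Rule p' r') (hp : p <:+: p') : p = p' := by
  cases h <;> cases h' <;> revert hp <;> decide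

theorem unique (h : Rule p r) (h' : Rule p r') : r = r' := by
  cases h <;> cases h' <;> rfl

theorem mem_forbiddenWords (h : Rule p r) : p ∈ forbiddenWords := by
  cases h <;> decide

theorem exists_of_mem_forbiddenWords (hp : p ∈ forbiddenWords) : ∃ r, Rule p r := by
  fin_cases hp <;> exact ⟨_, by constructor⟩

theorem eq_of_append_eq {p₁ p₂ t₁ t₂ : Word} {r₁ r₂ : List (ℤ × Word)} (h₁ : Rule p₁ r₁)
    (h₂ : Rule p₂ r₂) (h : p₁ ++ t₁ = p₂ ++ t₂) : p₁ = p₂ := by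
  rcases prefix_or_prefix_of_prefix (prefix_append p₁ t₁) (h ▸ prefix_append p₂ t₂) with hp | hp
  · exact h₁.eq_of_isInfix h₂ hp.isInfix
  · exact (h₂.eq_of_isInfix h₁ hp.isInfix).symm

theorem eq_nil_of_infix {p x t : Word} {r r' : List (ℤ × Word)} (h : Rule p r)
    (h' : Rule (x ++ p ++ t) r') : x = [] ∧ t = [] := by
  have := congrArg length (h.eq_of_isInfix h' (infix_append x p t))
  simp only [length_append] at this
  exact ⟨length_eq_zero_iff.1 (by omega), length_eq_zero_iff.1 (by omega)⟩

theorem mem_overlaps {u v s : Word} {r₁ r₂ : List (ℤ × Word)} (h₁ : Rule (u ++ v) r₁)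
    (h₂ : Rule (v ++ s) r₂) (hu : u ≠ []) (hv : v ≠ []) (hs : s ≠ []) :
    (u, v, s) ∈ overlaps := by
  -- parametrized by the split point `n = u.length`, the claim becomes decidable
  have key : ∀ {p₁ p₂ r₁ r₂}, Rule p₁ r₁ → Rule p₂ r₂ → ∀ n : ℕ, n < p₁.length →
      0 < n ∧ p₁.length - n < p₂.length ∧ p₁.drop n = p₂.take (p₁.length - n) →
      (p₁.take n, p₁.drop n, p₂.drop (p₁.length - n)) ∈ overlaps := by
    intro p₁ p₂ r₁ r₂ h₁ h₂
    cases h₁ <;> cases h₂ <;> intro n hn <;> simp only [length_cons, length_nil] at hn <;>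
      interval_cases n <;> decide
  have hu' := length_pos_iff.2 hu
  have hv' := length_pos_iff.2 hv
  have hs' := length_pos_iff.2 hs
  simpa using key h₁ h₂ u.length (by simpa using hv') ⟨hu', by simpa using hs', by simp⟩

end Rule

theorem normalWord_iff {w : Word} :
    normalWord w ↔ ∀ x p t r, Rule p r → w ≠ x ++ p ++ t := by
  constructor
  · rintro hw x p t r hr rfl
    exact hw p hr.mem_forbiddenWords ⟨x, t, rfl⟩
  · rintro hw p hp ⟨x, t, rfl⟩
    obtain ⟨r, hr⟩ := Rule.exists_of_mem_forbiddenWords hp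
    exact hw x p t r hr rfl

instance : DecidablePred normalWord := fun _ => by
  unfold normalWord
  infer_instance

section Reduct

variable {M : Type*} [AddCommGroup M] (N : Word → M)

def reduct (x : Word) (r : List (ℤ × Word)) (t : Word) : M :=
  (r.map fun q => q.1 • N (x ++ q.2 ++ t)).sum

def Respects : Prop :=
  ∀ x p t r, Rule p r → N (x ++ p ++ t) = reduct N x r t

def RespectsBelow (w : Word) : Prop :=
  ∀ x p t r, Rule p r → WordLt (x ++ p ++ t) w → N (x ++ p ++ t) = reduct N x r t

variable {N}

theorem reduct_shift (x t y z : Word) (r : List (ℤ × Word)) :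
    reduct (fun v => N (x ++ v ++ t)) y r z = reduct N (x ++ y) r (z ++ t) := by
  simp only [reduct, append_assoc]

theorem RespectsBelow.shift {x w t : Word} (hN : RespectsBelow N (x ++ w ++ t)) :
    RespectsBelow (fun v => N (x ++ v ++ t)) w := by
  intro y p z r hr hlt
  rw [reduct_shift]
  simpa only [append_assoc] using hN (x ++ y) p (z ++ t) r hr (by simpa using hlt.context x t)

theorem Respects.shift (hN : Respects N) (x t : Word) : Respects fun v => N (x ++ v ++ t) := by
  intro y p z r hr
  rw [reduct_shift]
  simpa only [append_assoc] using hN (x ++ y) p (z ++ t) r hr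

theorem Respects.map {M' : Type*} [AddCommGroup M'] (hN : Respects N) (φ : M →+ M') :
    Respects fun w => φ (N w) := by
  intro x p t r hr
  simp only [hN x p t r hr, reduct, map_list_sum, map_map, Function.comp_def, map_zsmul]

theorem reduct_disjoint {x p₁ m p₂ t : Word} {r₁ r₂ : List (ℤ × Word)}
    (hN : RespectsBelow N (x ++ p₁ ++ m ++ p₂ ++ t)) (h₁ : Rule p₁ r₁) (h₂ : Rule p₂ r₂) :
    reduct N x r₁ (m ++ p₂ ++ t) = reduct N (x ++ p₁ ++ m) r₂ t := by
  have left : ∀ q ∈ r₁, N (x ++ q.2 ++ (m ++ p₂ ++ t)) = reduct N (x ++ q.2 ++ m) r₂ t := by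
    intro q hq
    simpa only [append_assoc] using hN (x ++ q.2 ++ m) p₂ t r₂ h₂
      (by simpa only [append_assoc] using (h₁.wordLt q hq).context x (m ++ p₂ ++ t))
  have right : ∀ q ∈ r₂, N (x ++ p₁ ++ m ++ q.2 ++ t) = reduct N x r₁ (m ++ q.2 ++ t) := by
    intro q hq
    simpa only [append_assoc] using hN x p₁ (m ++ q.2 ++ t) r₁ h₁
      (by simpa only [append_assoc] using (h₂.wordLt q hq).context (x ++ p₁ ++ m) t)
  calc reduct N x r₁ (m ++ p₂ ++ t)
      = (r₁.map fun q₁ => (r₂.map fun q₂ =>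
          q₁.1 • q₂.1 • N (x ++ q₁.2 ++ m ++ q₂.2 ++ t)).sum).sum := by
        refine congrArg sum (map_congr_left fun q₁ hq₁ => ?_)
        rw [left q₁ hq₁, reduct, List.smul_sum, map_map]
        simp only [Function.comp_def, append_assoc]
    _ = (r₂.map fun q₂ => (r₁.map fun q₁ =>
          q₁.1 • q₂.1 • N (x ++ q₁.2 ++ m ++ q₂.2 ++ t)).sum).sum := sum_map_sum_map _ _ _
    _ = reduct N (x ++ p₁ ++ m) r₂ t := by
        refine congrArg sum (map_congr_left fun q₂ hq₂ => ?_)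
        rw [right q₂ hq₂, reduct, List.smul_sum, map_map]
        simp only [Function.comp_def, append_assoc, smul_comm q₂.1]

theorem reduct_overlap {u v s : Word} {r₁ r₂ : List (ℤ × Word)}
    (hN : RespectsBelow N (u ++ v ++ s)) (h₁ : Rule (u ++ v) r₁) (h₂ : Rule (v ++ s) r₂)
    (hu : u ≠ []) (hv : v ≠ []) (hs : s ≠ []) :
    reduct N [] r₁ s = reduct N u r₂ [] := by
  have hmem := Rule.mem_overlaps h₁ h₂ hu hv hs
  simp only [overlaps, mem_cons, Prod.mk.injEq, not_mem_nil, or_false] at hmem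
  rcases hmem with ⟨rfl, rfl, rfl⟩ | ⟨rfl, rfl, rfl⟩ | ⟨rfl, rfl, rfl⟩ | ⟨rfl, rfl, rfl⟩ |
    ⟨rfl, rfl, rfl⟩ | ⟨rfl, rfl, rfl⟩ | ⟨rfl, rfl, rfl⟩ | ⟨rfl, rfl, rfl⟩ | ⟨rfl, rfl, rfl⟩ |
    ⟨rfl, rfl, rfl⟩ <;> cases h₁ <;> cases h₂
  · have e₁ : N [a, d, delInv, a] = N [a, c, delInv, b] + N [a] := by
      simpa [reduct] using hN [a] _ [] _ .d_delInv_a (by decide)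
    have e₂ : N [del, delInv, a] = N [a] := by
      simpa [reduct] using hN [] _ [a] _ .del_delInv (by decide)
    have e₃ : N [c, a, delInv, b] = N [a, c, delInv, b] := by
      simpa [reduct] using hN [] _ [delInv, b] _ .ca (by decide)
    simp [reduct, e₁, e₂, e₃, add_comm]
  · have e₁ : N [a, d, delInv, c] = N [a, c, delInv, d] := by
      simpa [reduct] using hN [a] _ [] _ .d_delInv_c (by decide)
    have e₂ : N [del, delInv, c] = N [c] := by
      simpa [reduct] using hN [] _ [c] _ .del_delInv (by decide)
    have e₃ : N [c, a, delInv, d] = N [a, c, delInv, d] := by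
      simpa [reduct] using hN [] _ [delInv, d] _ .ca (by decide)
    simp [reduct, e₁, e₂, e₃]
  · have e₁ : N [b, d, delInv, a] = N [b, c, delInv, b] + N [b] := by
      simpa [reduct] using hN [b] _ [] _ .d_delInv_a (by decide)
    have e₂ : N [d, a, delInv, b] = N [del, delInv, b] + N [b, c, delInv, b] := by
      simpa [reduct] using hN [] _ [delInv, b] _ .da (by decide)
    have e₃ : N [del, delInv, b] = N [b] := by
      simpa [reduct] using hN [] _ [b] _ .del_delInv (by decide)
    simp [reduct, e₁, e₂, e₃, add_comm]
  · have e₁ : N [b, d, delInv, c] = N [b, c, delInv, d] := by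
      simpa [reduct] using hN [b] _ [] _ .d_delInv_c (by decide)
    have e₂ : N [d, a, delInv, d] = N [del, delInv, d] + N [b, c, delInv, d] := by
      simpa [reduct] using hN [] _ [delInv, d] _ .da (by decide)
    have e₃ : N [del, delInv, d] = N [d] := by
      simpa [reduct] using hN [] _ [d] _ .del_delInv (by decide)
    simp [reduct, e₁, e₂, e₃]
  · rfl
  · rfl
  · have e₁ : N [a, delInv, d, a] = N [a, delInv, del] + N [a, delInv, b, c] := by
      simpa [reduct] using hN [a, delInv] _ [] _ .da (by decide)
    have e₂ : N [a, delInv, del] = N [a] := by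
      simpa [reduct] using hN [a] _ [] _ .delInv_del (by decide)
    have e₃ : N [b, delInv, a, c] = N [a, delInv, b, c] := by
      simpa [reduct] using hN [] _ [c] _ .b_delInv_a (by decide)
    simp [reduct, e₁, e₂, e₃]
  · have e₁ : N [a, delInv, d, b] = N [a, delInv, b, d] := by
      simpa [reduct] using hN [a, delInv] _ [] _ .db (by decide)
    have e₂ : N [b, delInv, a, d] = N [a, delInv, b, d] := by
      simpa [reduct] using hN [] _ [d] _ .b_delInv_a (by decide)
    have e₃ : N [b, delInv, del] = N [b] := by
      simpa [reduct] using hN [b] _ [] _ .delInv_del (by decide)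
    simp [reduct, e₁, e₂, e₃]
  · have e₁ : N [c, delInv, d, a] = N [c, delInv, del] + N [c, delInv, b, c] := by
      simpa [reduct] using hN [c, delInv] _ [] _ .da (by decide)
    have e₂ : N [c, delInv, del] = N [c] := by
      simpa [reduct] using hN [c] _ [] _ .delInv_del (by decide)
    have e₃ : N [d, delInv, a, c] = N [c, delInv, b, c] + N [c] := by
      simpa [reduct] using hN [] _ [c] _ .d_delInv_a (by decide)
    simp [reduct, e₁, e₂, e₃, add_comm]
  · have e₁ : N [c, delInv, d, b] = N [c, delInv, b, d] := by
      simpa [reduct] using hN [c, delInv] _ [] _ .db (by decide)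
    have e₂ : N [d, delInv, a, d] = N [c, delInv, b, d] + N [d] := by
      simpa [reduct] using hN [] _ [d] _ .d_delInv_a (by decide)
    have e₃ : N [d, delInv, del] = N [d] := by
      simpa [reduct] using hN [d] _ [] _ .delInv_del (by decide)
    simp [reduct, e₁, e₂, e₃, add_comm]

theorem reduct_eq_reduct {w x₁ p₁ t₁ x₂ p₂ t₂ : Word} {r₁ r₂ : List (ℤ × Word)}
    (hN : RespectsBelow N w) (h₁ : Rule p₁ r₁) (h₂ : Rule p₂ r₂)
    (hw₁ : w = x₁ ++ p₁ ++ t₁) (hw₂ : w = x₂ ++ p₂ ++ t₂) :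
    reduct N x₁ r₁ t₁ = reduct N x₂ r₂ t₂ := by
  wlog hle : x₁.length ≤ x₂.length generalizing x₁ p₁ t₁ r₁ x₂ p₂ t₂ r₂
  · exact (this h₂ h₁ hw₂ hw₁ (by omega)).symm
  subst hw₁
  simp only [append_assoc] at hw₂
  obtain ⟨m, rfl, hm⟩ : ∃ m, x₂ = x₁ ++ m ∧ p₁ ++ t₁ = m ++ (p₂ ++ t₂) := by
    rcases append_eq_append_iff.1 hw₂ with ⟨m, h, h'⟩ | ⟨m, rfl, h'⟩
    · exact ⟨m, h, h'⟩
    · obtain rfl : m = [] := by simpa using hle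
      exact ⟨[], by simp, h'.symm⟩
  -- the two redexes start at the same position
  rcases eq_or_ne m [] with rfl | hm₀
  · obtain rfl := h₁.eq_of_append_eq h₂ hm
    obtain rfl := append_cancel_left hm
    rw [h₁.unique h₂, append_nil]
  -- disjoint redexes
  rcases append_eq_append_iff.1 hm with ⟨m', rfl, rfl⟩ | ⟨v, rfl, hv⟩
  · simpa using reduct_disjoint (by simpa using hN) h₁ h₂
  -- adjacent redexes
  rcases eq_or_ne v [] with rfl | hv₀
  · simp only [append_nil, nil_append] at hv h₁ hN ⊢
    subst hv
    simpa using reduct_disjoint (m := []) (by simpa using hN) h₁ h₂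
  -- the second left-hand side would lie inside the first
  rcases append_eq_append_iff.1 hv with ⟨s, rfl, rfl⟩ | ⟨s, rfl, rfl⟩
  · exact absurd (h₂.eq_nil_of_infix (x := m) (t := s) (by simpa using h₁)).1 hm₀
  rcases eq_or_ne s [] with rfl | hs₀
  · exact absurd (h₂.eq_nil_of_infix (x := m) (t := []) (by simpa using h₁)).1 hm₀
  -- a proper overlap `m · v · s`
  rw [show x₁ ++ (m ++ v) ++ (s ++ t₂) = x₁ ++ (m ++ v ++ s) ++ t₂ by simp] at hN
  have := reduct_overlap hN.shift h₁ h₂ hm₀ hv₀ hs₀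
  rw [reduct_shift, reduct_shift] at this
  simpa using this

end Reduct

structure Redex (w : Word) where
  x : Word
  p : Word
  t : Word
  r : List (ℤ × Word)
  rule : Rule p r
  eq : w = x ++ p ++ t

theorem Redex.wordLt {w : Word} (ρ : Redex w) {q : ℤ × Word} (hq : q ∈ ρ.r) :
    WordLt (ρ.x ++ q.2 ++ ρ.t) w := by
  obtain ⟨x, p, t, r, hr, rfl⟩ := ρ
  exact (hr.wordLt q hq).context x t

theorem nonempty_redex_iff {w : Word} : Nonempty (Redex w) ↔ ¬ normalWord w := by
  refine ⟨fun ⟨ρ⟩ hw => normalWord_iff.1 hw ρ.x ρ.p ρ.t ρ.r ρ.rule ρ.eq, fun hw => ?_⟩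
  by_contra h
  exact hw (normalWord_iff.2 fun x p t r hr he => h ⟨⟨x, p, t, r, hr, he⟩⟩)

abbrev NormalWord : Type := {l : Word // normalWord l}

section Uniqueness

variable {M : Type*} [AddCommGroup M] {N : Word → M}

theorem Respects.eq_of_forall_normalWord {N' : Word → M} (hN : Respects N) (hN' : Respects N')
    (h : ∀ w, normalWord w → N w = N' w) : N = N' := by
  funext w
  induction w using wellFounded_wordLt.induction with
  | _ w ih =>
  by_cases hw : normalWord w
  · exact h w hw
  obtain ⟨⟨x, p, t, r, hr, rfl⟩⟩ := nonempty_redex_iff.2 hw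
  rw [hN x p t r hr, hN' x p t r hr, reduct, reduct]
  exact congrArg sum (map_congr_left fun q hq => by rw [ih _ ((hr.wordLt q hq).context x t)])

theorem Respects.mem_span {R : Type*} [Ring R] [Module R M] (hN : Respects N) (w : Word) :
    N w ∈ Submodule.span R (Set.range fun l : NormalWord => N l) := by
  induction w using wellFounded_wordLt.induction with
  | _ w ih =>
  by_cases hw : normalWord w
  · exact Submodule.subset_span ⟨⟨w, hw⟩, rfl⟩
  obtain ⟨⟨x, p, t, r, hr, rfl⟩⟩ := nonempty_redex_iff.2 hw
  rw [hN x p t r hr, reduct]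
  refine list_sum_mem fun y hy => ?_
  obtain ⟨q, hq, rfl⟩ := mem_map.1 hy
  exact Submodule.smul_of_tower_mem _ q.1 (ih _ ((hr.wordLt q hq).context x t))

end Uniqueness

section NormalForm

variable (R : Type*) [Ring R]

/-- Reduces an arbitrarily chosen redex; by `nf_respects` the choice does not matter. -/
noncomputable def nf : Word → NormalWord →₀ R :=
  wellFounded_wordLt.fix fun w nfBelow =>
    if hw : normalWord w then Finsupp.single ⟨w, hw⟩ 1
    else
      let ρ : Redex w := Classical.choice (nonempty_redex_iff.2 hw)
      (ρ.r.attach.map fun q => q.1.1 • nfBelow (ρ.x ++ q.1.2 ++ ρ.t) (ρ.wordLt q.2)).sum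

variable {R}

theorem nf_of_normalWord {w : Word} (hw : normalWord w) : nf R w = Finsupp.single ⟨w, hw⟩ 1 := by
  rw [nf, WellFounded.fix_eq, dif_pos hw]

theorem exists_nf_eq_reduct {w : Word} (hw : ¬ normalWord w) :
    ∃ ρ : Redex w, nf R w = reduct (nf R) ρ.x ρ.r ρ.t := by
  refine ⟨Classical.choice (nonempty_redex_iff.2 hw), ?_⟩
  rw [nf, WellFounded.fix_eq, dif_neg hw]
  exact congrArg sum (attach_map_val (f := fun q : ℤ × Word => q.1 • nf R (_ ++ q.2 ++ _)))

theorem nf_respects : Respects (nf R) := by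
  suffices ∀ w x p t r, Rule p r → w = x ++ p ++ t → nf R w = reduct (nf R) x r t from
    fun x p t r hr => this _ x p t r hr rfl
  intro w
  induction w using wellFounded_wordLt.induction with
  | _ w ih =>
  intro x p t r hr hw
  have hN : RespectsBelow (nf R) w := fun x' p' t' r' hr' hlt => ih _ hlt x' p' t' r' hr' rfl
  obtain ⟨ρ, hρ⟩ := exists_nf_eq_reduct (R := R) (nonempty_redex_iff.1 ⟨⟨x, p, t, r, hr, hw⟩⟩)
  rw [hρ]
  exact reduct_eq_reduct hN ρ.rule hr ρ.eq hw

end NormalForm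

section Relators

variable {A : Type*} [Ring A]

def relator (f : GL2Gen → A) (p : Word) (r : List (ℤ × Word)) : A :=
  (p.map f).prod - (r.map fun q => q.1 • (q.2.map f).prod).sum

theorem respects_prod_of_relator_eq_zero {f : GL2Gen → A}
    (h : ∀ ⦃p r⦄, Rule p r → relator f p r = 0) : Respects fun w => (w.map f).prod := by
  intro x p t r hr
  have hp := sub_eq_zero.1 (h hr)
  simp only [reduct, map_append, prod_append, hp]
  rw [← sum_map_mul_left, ← sum_map_mul_right]
  simp only [mul_smul_comm, smul_mul_assoc]

variable (k : Type) [Field k]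

theorem _root_.GL2Rel.rel.exists_rule {x y : FGL2 k} (h : GL2Rel.rel k x y) :
    ∃ p r, Rule p r ∧
      (relator (FreeAlgebra.ι k) p r = x - y ∨ relator (FreeAlgebra.ι k) p r = y - x) := by
  cases h <;>
    [refine ⟨_, _, .ca, .inr ?_⟩;
     refine ⟨_, _, .db, .inr ?_⟩;
     refine ⟨_, _, .cb, .inr ?_⟩;
     refine ⟨_, _, .da, .inl ?_⟩;
     refine ⟨_, _, .del_delInv, .inl ?_⟩;
     refine ⟨_, _, .delInv_del, .inl ?_⟩;
     refine ⟨_, _, .b_delInv_c, .inr ?_⟩;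
     refine ⟨_, _, .d_delInv_a, .inl ?_⟩;
     refine ⟨_, _, .b_delInv_a, .inl ?_⟩;
     refine ⟨_, _, .d_delInv_c, .inr ?_⟩] <;>
    simp only [relator, map_cons, map_nil, prod_cons, prod_nil, mul_one, mul_assoc, sum_cons,
      sum_nil, add_zero, one_smul, neg_smul] <;> abel

theorem Rule.exists_rel {p : Word} {r : List (ℤ × Word)} (hr : Rule p r) :
    ∃ x y, GL2Rel.rel k x y ∧
      (relator (FreeAlgebra.ι k) p r = x - y ∨ relator (FreeAlgebra.ι k) p r = y - x) := by
  cases hr <;>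
    [refine ⟨_, _, .ac_comm, .inr ?_⟩;
     refine ⟨_, _, .det1, .inr ?_⟩;
     refine ⟨_, _, .det2, .inl ?_⟩;
     refine ⟨_, _, .bd_comm, .inr ?_⟩;
     refine ⟨_, _, .delInv1, .inl ?_⟩;
     refine ⟨_, _, .delInv2, .inl ?_⟩;
     refine ⟨_, _, .anti3, .inl ?_⟩;
     refine ⟨_, _, .anti1, .inr ?_⟩;
     refine ⟨_, _, .anti2, .inl ?_⟩;
     refine ⟨_, _, .anti4, .inr ?_⟩] <;>
    simp only [relator, map_cons, map_nil, prod_cons, prod_nil, mul_one, mul_assoc, sum_cons,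
      sum_nil, add_zero, one_smul, neg_smul] <;> abel

variable {k} [Algebra k A]

theorem lift_relator (f : GL2Gen → A) (p : Word) (r : List (ℤ × Word)) :
    FreeAlgebra.lift k f (relator (FreeAlgebra.ι k) p r) = relator f p r := by
  simp [relator, map_list_sum, map_list_prod, map_map, Function.comp_def]

theorem lift_respects_rel_iff (f : GL2Gen → A) :
    (∀ ⦃x y⦄, GL2Rel.rel k x y → FreeAlgebra.lift k f x = FreeAlgebra.lift k f y) ↔
      ∀ ⦃p r⦄, Rule p r → relator f p r = 0 := by
  constructor
  · intro h p r hr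
    obtain ⟨x, y, hxy, he | he⟩ := hr.exists_rel k <;>
      rw [← lift_relator (k := k), he, map_sub, h hxy, sub_self]
  · intro h x y hxy
    obtain ⟨p, r, hr, he | he⟩ := hxy.exists_rule
    · rw [← sub_eq_zero, ← map_sub, ← he, lift_relator, h hr]
    · rw [eq_comm, ← sub_eq_zero, ← map_sub, ← he, lift_relator, h hr]

end Relators

section LeftMultiplication

variable (k : Type*) [CommRing k]

noncomputable def leftMul (g : GL2Gen) : Module.End k (NormalWord →₀ k) :=
  Finsupp.linearCombination k fun l => nf k (g :: l.1)

variable {k}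

theorem leftMul_nf (g : GL2Gen) (w : Word) : leftMul k g (nf k w) = nf k (g :: w) := by
  have h := Respects.eq_of_forall_normalWord (nf_respects.map (leftMul k g).toAddMonoidHom)
    (by simpa using nf_respects.shift [g] []) fun w hw => by
      simp [nf_of_normalWord hw, leftMul]
  exact congrFun h w

theorem prod_leftMul_nf (u w : Word) : (u.map (leftMul k)).prod (nf k w) = nf k (u ++ w) := by
  induction u with
  | nil => rfl
  | cons g u ih => rw [map_cons, prod_cons, Module.End.mul_apply, ih, leftMul_nf, cons_append]

theorem relator_leftMul_eq_zero {p : Word} {r : List (ℤ × Word)} (hr : Rule p r) :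
    relator (leftMul k) p r = 0 := by
  have key : ∀ w, LinearMap.applyₗ (nf k w) (relator (leftMul k) p r) = 0 := by
    intro w
    rw [relator, map_sub, map_list_sum, map_map, sub_eq_zero]
    simpa [Function.comp_def, prod_leftMul_nf, reduct] using nf_respects (R := k) [] p w r hr
  refine Finsupp.lhom_ext fun l c => ?_
  rw [← mul_one c, ← Finsupp.smul_single', map_smul, ← nf_of_normalWord l.2]
  simpa using congrArg (c • ·) (key l)

end LeftMultiplication

variable (k : Type) [Field k]

noncomputable def normalFormRep : OncGL2 k →ₐ[k] Module.End k (NormalWord →₀ k) :=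
  RingQuot.liftAlgHom k
    ⟨FreeAlgebra.lift k (leftMul k), (lift_respects_rel_iff _).2 fun _ _ => relator_leftMul_eq_zero⟩

variable {k}

theorem normalFormRep_prod (w : Word) :
    normalFormRep k ((w.map (gl2gen k)).prod) (nf k []) = nf k w := by
  simp [normalFormRep, gl2gen, map_list_prod, map_map, Function.comp_def, prod_leftMul_nf]

variable (k)

theorem linearIndependent_prod_normalWord :
    LinearIndependent k fun l : NormalWord => ((l : Word).map (gl2gen k)).prod := by
  refine LinearIndependent.of_comp
    ((LinearMap.applyₗ (nf k [])).comp (normalFormRep k).toLinearMap) ?_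
  convert Finsupp.linearIndependent_single_one k NormalWord with l
  simp [normalFormRep_prod, nf_of_normalWord l.2]

theorem lift_gl2gen : FreeAlgebra.lift k (gl2gen k) = RingQuot.mkAlgHom k (GL2Rel.rel k) :=
  FreeAlgebra.hom_ext (funext fun g => by simp [gl2gen])

theorem relator_gl2gen_eq_zero {p : Word} {r : List (ℤ × Word)} (hr : Rule p r) :
    relator (gl2gen k) p r = 0 :=
  (lift_respects_rel_iff (k := k) (gl2gen k)).1 (fun _ _ h => by
    simpa only [lift_gl2gen] using RingQuot.mkAlgHom_rel k h) hr

theorem span_prod_eq_top :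
    Submodule.span k (Set.range fun w : Word => (w.map (gl2gen k)).prod) = ⊤ := by
  have hadj : Algebra.adjoin k (Set.range (gl2gen k)) = ⊤ := by
    rw [Algebra.adjoin_range_eq_range_freeAlgebra_lift, lift_gl2gen, AlgHom.range_eq_top]
    exact RingQuot.mkAlgHom_surjective k _
  have hclosure : (Submonoid.closure (Set.range (gl2gen k)) : Set (OncGL2 k)) ⊆
      Set.range fun w : Word => (w.map (gl2gen k)).prod := by
    intro y hy
    induction hy using Submonoid.closure_induction with
    | mem y hy => obtain ⟨g, rfl⟩ := hy; exact ⟨[g], by simp⟩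
    | one => exact ⟨[], by simp⟩
    | mul y z _ _ hy hz =>
      obtain ⟨u, rfl⟩ := hy
      obtain ⟨v, rfl⟩ := hz
      exact ⟨u ++ v, by simp⟩
  rw [eq_top_iff, ← Algebra.top_toSubmodule, ← hadj, Algebra.adjoin_eq_span]
  exact Submodule.span_mono hclosure

theorem span_prod_normalWord_eq_top :
    Submodule.span k (Set.range fun l : NormalWord => ((l : Word).map (gl2gen k)).prod) = ⊤ := by
  rw [eq_top_iff, ← span_prod_eq_top, Submodule.span_le]
  rintro _ ⟨w, rfl⟩
  exact (respects_prod_of_relator_eq_zero fun _ _ hr => relator_gl2gen_eq_zero k hr).mem_span w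

end GL2NF

/-- The normal-form monomials form a `k`-vector space basis of
`O_nc(GL₂)`: they are linearly independent and span. -/
theorem basis_of_OncGL2 (k : Type) [Field k] :
    LinearIndependent k
      (fun l : {l : List GL2Gen // normalWord l} => ((l : List GL2Gen).map (gl2gen k)).prod) ∧
    Submodule.span k
      (Set.range (fun l : {l : List GL2Gen // normalWord l} =>
        ((l : List GL2Gen).map (gl2gen k)).prod)) = ⊤ :=
  ⟨GL2NF.linearIndependent_prod_normalWord k, GL2NF.span_prod_normalWord_eq_top k⟩
end
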